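/- Let K be a regular incidence complex of rank n ≥ 1 with flag-transitive subgroup Γ ≤ Aut(K) and distinguished generating subgroups R_{-1},...,R_n with respect to a base flag. Then for -1 ≤ i < j-1 ≤ n-1, the product sets satisfy R_i R_j = ⟨R_i, R_j⟩ = R_j R_i. -/

import Mathlib

open Set Pointwise

/-- `Φ` is a flag of the subset `s` of the poset `α`: a chain contained in `s`
that is maximal among chains contained in `s`. -/
def IsFlagOf {α : Type*} [PartialOrder α] (s Φ : Set α) : Prop :=
  Φ ⊆ s ∧ IsChain (· ≤ ·) Φ ∧
    ∀ Ψ : Set α, Ψ ⊆ s → IsChain (· ≤ ·) Ψ → Φ ⊆ Ψ → Ψ = Φ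

/-- Two flags are adjacent if each differs from the other in exactly one face. -/
def FlagAdj {α : Type*} [PartialOrder α] (Φ Ψ : Set α) : Prop :=
  (Φ \ Ψ).ncard = 1 ∧ (Ψ \ Φ).ncard = 1

/-- The set `s` is flag-connected: any two flags of `s` are joined by a sequence
of successively adjacent flags of `s`. -/
def FlagConnIn {α : Type*} [PartialOrder α] (s : Set α) : Prop :=
  ∀ Φ Ψ : Set α, IsFlagOf s Φ → IsFlagOf s Ψ →
    Relation.ReflTransGen
      (fun A B => IsFlagOf s A ∧ IsFlagOf s B ∧ FlagAdj A B) Φ Ψ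

/-- The section between `F` and `G` is connected: any two of its proper faces are
joined by a finite sequence of successively incident proper faces of the section. -/
def ConnIn {α : Type*} [PartialOrder α] (F G : α) : Prop :=
  ∀ H K : α, F < H → H < G → F < K → K < G →
    Relation.ReflTransGen
      (fun a b => F < a ∧ a < G ∧ F < b ∧ b < G ∧ (a ≤ b ∨ b ≤ a)) H K

/-- An incidence complex of rank `n`: a bounded ranked poset (rank function `rk`
with range `{-1,…,n}`, strictly monotone, all flags having `n+2` elements hitting
every rank), strongly connected (I3), and with at least two `i`-faces between any
incident pair of faces of ranks `i-1` and `i+1` (I4). -/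
structure IncComplex (α : Type*) [PartialOrder α] [BoundedOrder α]
    (n : ℤ) (rk : α → ℤ) : Prop where
  rk_bot : rk (⊥ : α) = -1
  rk_top : rk (⊤ : α) = n
  rk_strictMono : ∀ a b : α, a < b → rk a < rk b
  chain_flag : ∀ c : Set α, IsChain (· ≤ ·) c →
    ∃ Φ : Set α, c ⊆ Φ ∧ IsFlagOf Set.univ Φ ∧ Φ.ncard = (n + 2).toNat
  flag_rk : ∀ Φ : Set α, IsFlagOf Set.univ Φ →
    ∀ i ∈ Set.Icc (-1 : ℤ) n, ∃ a ∈ Φ, rk a = i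
  strong_conn : ∀ F G : α, F ≤ G → 2 ≤ rk G - rk F - 1 → ConnIn F G
  two_between : ∀ F G : α, F < G → rk G = rk F + 2 →
    ∃ H H' : α, H ≠ H' ∧ F < H ∧ H < G ∧ F < H' ∧ H' < G

/-- A complex is regular if its automorphism group acts transitively on flags. -/
def IsRegularIC (α : Type*) [PartialOrder α] : Prop :=
  ∀ Φ Ψ : Set α, IsFlagOf Set.univ Φ → IsFlagOf Set.univ Ψ →
    ∃ g : α ≃o α, ⇑g '' Φ = Ψ

/-- `Γ` is a flag-transitive subgroup of the automorphism group. -/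
def FlagTrans {α : Type*} [PartialOrder α] (Γ : Subgroup (α ≃o α)) : Prop :=
  ∀ Φ Ψ : Set α, IsFlagOf Set.univ Φ → IsFlagOf Set.univ Ψ →
    ∃ g ∈ Γ, ⇑g '' Φ = Ψ

/-- The distinguished generating subset `R_i`: the stabilizer in `Γ` of
`Φ \ {F_i}`, where `F` enumerates the base flag by rank. -/
def Rset {α : Type*} [PartialOrder α] (Γ : Subgroup (α ≃o α)) (F : ℤ → α)
    (n i : ℤ) : Set (α ≃o α) :=
  {g | g ∈ Γ ∧ ∀ j ∈ Set.Icc (-1 : ℤ) n, j ≠ i → g (F j) = F j}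


/-! A flag of the base flag with only its `m`-face `F m` exchanged for another face `a` of
rank `m` between `F (m - 1)` and `F (m + 1)` is again a flag, so by flag-transitivity some
`γ ∈ R_m` carries `F m` to `a`. Hence every `φ ∈ ⟨R_i, R_j⟩`, which moves at most `F i` and
`F j`, can be written `φ = γ (γ⁻¹ φ)` with `γ ∈ R_i` matching `φ` on `F i`; as `i` and `j`
are not adjacent, `φ` fixes the neighbours of `F i`, and `γ⁻¹ φ` lies in `R_j`. -/

lemma isFlagOf_univ_iff_isMaxChain {α : Type*} [PartialOrder α] {Φ : Set α} :
    IsFlagOf univ Φ ↔ IsMaxChain (· ≤ ·) Φ :=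
  ⟨fun h => ⟨h.2.1, fun _ hΨ hΦΨ => (h.2.2 _ (subset_univ _) hΨ hΦΨ).symm⟩,
    fun h => ⟨subset_univ _, h.1, fun _ _ hΨ hΦΨ => (h.2 hΨ hΦΨ).symm⟩⟩

lemma IsFlagOf.image {α β : Type*} [PartialOrder α] [PartialOrder β] {Φ : Set α}
    (hΦ : IsFlagOf univ Φ) (g : α ≃o β) : IsFlagOf univ (g '' Φ) :=
  isFlagOf_univ_iff_isMaxChain.2 ((isFlagOf_univ_iff_isMaxChain.1 hΦ).image g)

section StrictMonoRank

variable {α : Type*} [PartialOrder α] {rk : α → ℤ}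

lemma IsChain.eq_of_rk_eq (hrk : StrictMono rk) {Φ : Set α} (hΦ : IsChain (· ≤ ·) Φ)
    {a b : α} (ha : a ∈ Φ) (hb : b ∈ Φ) (h : rk a = rk b) : a = b := by
  rcases hΦ.total ha hb with hab | hba
  · exact hab.eq_of_not_lt fun hlt => (hrk hlt).ne h
  · exact (hba.eq_of_not_lt fun hlt => (hrk hlt).ne h.symm).symm

lemma IsChain.monotoneOn_of_rk_eq (hrk : StrictMono rk) {S : Set ℤ} {G : ℤ → α}
    (hG : IsChain (· ≤ ·) (G '' S)) (hGrk : ∀ k ∈ S, rk (G k) = k) : MonotoneOn G S := by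
  intro k hk l hl hkl
  rcases hG.total (mem_image_of_mem G hk) (mem_image_of_mem G hl) with hkl' | hlk
  · exact hkl'
  have hlk' := hrk.monotone hlk
  rw [hGrk k hk, hGrk l hl] at hlk'
  rw [le_antisymm hkl hlk']

end StrictMonoRank

namespace IncComplex

variable {α : Type*} [PartialOrder α] [BoundedOrder α] {n : ℤ} {rk : α → ℤ}

lemma strictMono_rk (hK : IncComplex α n rk) : StrictMono rk :=
  hK.rk_strictMono

lemma neg_one_le_rk (hK : IncComplex α n rk) (a : α) : -1 ≤ rk a :=
  hK.rk_bot ▸ hK.strictMono_rk.monotone bot_le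

lemma rk_le (hK : IncComplex α n rk) (a : α) : rk a ≤ n :=
  hK.rk_top ▸ hK.strictMono_rk.monotone le_top

/-- The faces of a flag below `a` have the ranks `-1, …, rk a - 1`, one each. -/
lemma ncard_lt_of_mem_flag (hK : IncComplex α n rk) {Φ : Set α}
    (hΦ : IsFlagOf univ Φ) {a : α} (ha : a ∈ Φ) :
    {b ∈ Φ | b < a}.ncard = (rk a + 1).toNat := by
  have hrange : rk '' {b ∈ Φ | b < a} = Icc (-1) (rk a - 1) := by
    ext k
    constructor
    · rintro ⟨b, ⟨-, hba⟩, rfl⟩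
      exact ⟨hK.neg_one_le_rk b, Int.le_sub_one_of_lt (hK.strictMono_rk hba)⟩
    · rintro ⟨hk₁, hk₂⟩
      obtain ⟨b, hbΦ, rfl⟩ := hK.flag_rk Φ hΦ k ⟨hk₁, by linarith [hK.rk_le a]⟩
      exact ⟨b, ⟨hbΦ, hΦ.2.1.lt_of_not_ge ha hbΦ
        fun hab => by linarith [hK.strictMono_rk.monotone hab]⟩, rfl⟩
  have hinj : InjOn rk {b ∈ Φ | b < a} :=
    fun _ hx _ hy => hΦ.2.1.eq_of_rk_eq hK.strictMono_rk hx.1 hy.1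
  rw [← hinj.ncard_image, hrange, ← Finset.coe_Icc, ncard_coe_finset, Int.card_Icc]
  congr 1
  ring

lemma rk_apply (hK : IncComplex α n rk) (g : α ≃o α) (a : α) : rk (g a) = rk a := by
  obtain ⟨Φ, haΦ, hΦ, -⟩ := hK.chain_flag {a} subsingleton_singleton.isChain
  have ha : a ∈ Φ := haΦ rfl
  have hbelow : {b ∈ g '' Φ | b < g a} = g '' {b ∈ Φ | b < a} := by
    ext x
    constructor
    · rintro ⟨⟨c, hc, rfl⟩, hlt⟩
      exact ⟨c, ⟨hc, g.lt_iff_lt.mp hlt⟩, rfl⟩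
    · rintro ⟨c, ⟨hc, hlt⟩, rfl⟩
      exact ⟨⟨c, hc, rfl⟩, g.lt_iff_lt.mpr hlt⟩
  have h := hK.ncard_lt_of_mem_flag (hΦ.image g) (mem_image_of_mem g ha)
  rw [hbelow, ncard_image_of_injective _ g.injective, hK.ncard_lt_of_mem_flag hΦ ha] at h
  have := hK.neg_one_le_rk a
  have := hK.neg_one_le_rk (g a)
  omega

/-- Every flag has `n + 2` faces, so a chain with one face of each rank is already maximal. -/
lemma isFlagOf_image_of_rk_eq (hK : IncComplex α n rk) {G : ℤ → α}
    (hG : MonotoneOn G (Icc (-1) n)) (hGrk : ∀ k ∈ Icc (-1) n, rk (G k) = k) :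
    IsFlagOf univ (G '' Icc (-1) n) := by
  have hchain : IsChain (· ≤ ·) (G '' Icc (-1) n) := by
    rintro _ ⟨k, hk, rfl⟩ _ ⟨l, hl, rfl⟩ -
    exact (le_total k l).imp (hG hk hl) (hG hl hk)
  have hinj : InjOn G (Icc (-1) n) := fun k hk l hl hkl => by
    rw [← hGrk k hk, ← hGrk l hl, hkl]
  have hcard : (G '' Icc (-1) n).ncard = (n + 2).toNat := by
    rw [hinj.ncard_image, ← Finset.coe_Icc, ncard_coe_finset, Int.card_Icc]
    congr 1
    ring
  obtain ⟨Ψ, hsub, hΨ, hΨcard⟩ := hK.chain_flag _ hchain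
  have hfin : Ψ.Finite := finite_of_ncard_ne_zero <| by
    rw [hΨcard]
    have := hK.rk_top ▸ hK.neg_one_le_rk ⊤
    omega
  rwa [eq_of_subset_of_ncard_le hsub (by rw [hΨcard, hcard]) hfin]

lemma apply_eq_of_image_eq (hK : IncComplex α n rk) {F G : ℤ → α} {γ : α ≃o α}
    (hG : IsFlagOf univ (G '' Icc (-1) n)) (hFrk : ∀ k ∈ Icc (-1) n, rk (F k) = k)
    (hGrk : ∀ k ∈ Icc (-1) n, rk (G k) = k) (hγ : γ '' (F '' Icc (-1) n) = G '' Icc (-1) n)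
    {k : ℤ} (hk : k ∈ Icc (-1) n) : γ (F k) = G k := by
  refine hG.2.1.eq_of_rk_eq hK.strictMono_rk ?_ (mem_image_of_mem G hk) ?_
  · exact hγ ▸ mem_image_of_mem γ (mem_image_of_mem F hk)
  · rw [hK.rk_apply, hFrk k hk, hGrk k hk]

variable {Γ : Subgroup (α ≃o α)} {F : ℤ → α}

lemma exists_mem_Rset_apply_eq (hK : IncComplex α n rk) (hΓ : FlagTrans Γ)
    (hFflag : IsFlagOf univ (F '' Icc (-1) n)) (hFrk : ∀ k ∈ Icc (-1) n, rk (F k) = k)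
    {m : ℤ} (hm : m ∈ Icc (-1) n) {a : α} (ha : rk a = m)
    (hlo : -1 ≤ m - 1 → F (m - 1) ≤ a) (hhi : m + 1 ≤ n → a ≤ F (m + 1)) :
    ∃ γ ∈ Rset Γ F n m, γ (F m) = a := by
  classical
  set G := Function.update F m a
  have hGm : G m = a := Function.update_self m a F
  have hG : ∀ k ≠ m, G k = F k := fun k hkm => Function.update_of_ne hkm a F
  have hFmono := hFflag.2.1.monotoneOn_of_rk_eq hK.strictMono_rk hFrk
  have hGrk : ∀ k ∈ Icc (-1) n, rk (G k) = k := by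
    intro k hk
    by_cases hkm : k = m
    · rw [hkm, hGm, ha]
    · rw [hG k hkm, hFrk k hk]
  have hGmono : MonotoneOn G (Icc (-1) n) := by
    intro k hk l hl hkl
    obtain ⟨hk₁, hk₂⟩ := hk
    obtain ⟨hl₁, hl₂⟩ := hl
    rcases hkl.lt_or_eq with hlt | rfl
    · by_cases hkm : k = m
      · rw [hkm, hGm, hG l (by omega)]
        exact (hhi (by omega)).trans (hFmono ⟨by omega, by omega⟩ ⟨hl₁, hl₂⟩ (by omega))
      by_cases hlm : l = m
      · rw [hlm, hGm, hG k hkm]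
        exact (hFmono ⟨hk₁, hk₂⟩ ⟨by omega, by omega⟩ (by omega)).trans (hlo (by omega))
      · rw [hG k hkm, hG l hlm]
        exact hFmono ⟨hk₁, hk₂⟩ ⟨hl₁, hl₂⟩ hkl
    · exact le_rfl
  have hGflag := hK.isFlagOf_image_of_rk_eq hGmono hGrk
  obtain ⟨γ, hγΓ, hγ⟩ := hΓ _ _ hFflag hGflag
  have hγF := fun k hk => hK.apply_eq_of_image_eq hGflag hFrk hGrk hγ (k := k) hk
  refine ⟨γ, ⟨hγΓ, fun k hk hkm => ?_⟩, ?_⟩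
  · rw [hγF k hk, hG k hkm]
  · rw [hγF m hm, hGm]

lemma mem_Rset_mul_Rset (hK : IncComplex α n rk) (hΓ : FlagTrans Γ)
    (hFflag : IsFlagOf univ (F '' Icc (-1) n)) (hFrk : ∀ k ∈ Icc (-1) n, rk (F k) = k)
    {i j : ℤ} (hi : i ∈ Icc (-1) n) (hij : i + 1 ≠ j) (hji : j + 1 ≠ i) {φ : α ≃o α}
    (hφ : φ ∈ Γ ⊓ fixingSubgroup (α ≃o α) (F '' (Icc (-1) n \ {i, j}))) :
    φ ∈ Rset Γ F n i * Rset Γ F n j := by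
  obtain ⟨hφΓ, hφfix⟩ := hφ
  have hfix : ∀ k ∈ Icc (-1) n, k ≠ i → k ≠ j → φ (F k) = F k := fun k hk hki hkj =>
    (mem_fixingSubgroup_iff _).1 hφfix _ ⟨k, ⟨hk, by simp [hki, hkj]⟩, rfl⟩
  have hFmono := hFflag.2.1.monotoneOn_of_rk_eq hK.strictMono_rk hFrk
  obtain ⟨hi₁, hi₂⟩ := hi
  obtain ⟨γ, hγ, hγF⟩ := hK.exists_mem_Rset_apply_eq hΓ hFflag hFrk ⟨hi₁, hi₂⟩
    (a := φ (F i)) (by rw [hK.rk_apply, hFrk i ⟨hi₁, hi₂⟩])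
    (fun h => hfix (i - 1) ⟨h, by omega⟩ (by omega) (by omega) ▸
      φ.monotone (hFmono ⟨h, by omega⟩ ⟨hi₁, hi₂⟩ (by omega)))
    (fun h => hfix (i + 1) ⟨by omega, h⟩ (by omega) (by omega) ▸
      φ.monotone (hFmono ⟨hi₁, hi₂⟩ ⟨by omega, h⟩ (by omega)))
  refine ⟨γ, hγ, γ⁻¹ * φ, ⟨mul_mem (inv_mem hγ.1) hφΓ, fun k hk hkj => ?_⟩,
    mul_inv_cancel_left γ φ⟩
  have hγφ : γ (F k) = φ (F k) := by
    by_cases hki : k = i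
    · rw [hki, hγF]
    · rw [hγ.2 k hk hki, hfix k hk hki hkj]
  rw [RelIso.mul_apply, ← hγφ, RelIso.inv_apply_self]

lemma coe_closure_Rset_union_eq_mul (hK : IncComplex α n rk) (hΓ : FlagTrans Γ)
    (hFflag : IsFlagOf univ (F '' Icc (-1) n)) (hFrk : ∀ k ∈ Icc (-1) n, rk (F k) = k)
    {i j : ℤ} (hi : i ∈ Icc (-1) n) (hij : i + 1 ≠ j) (hji : j + 1 ≠ i) :
    (Subgroup.closure (Rset Γ F n i ∪ Rset Γ F n j) : Set (α ≃o α)) =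
      Rset Γ F n i * Rset Γ F n j := by
  have hRset_le : ∀ l ∈ ({i, j} : Set ℤ), ∀ g ∈ Rset Γ F n l,
      g ∈ Γ ⊓ fixingSubgroup (α ≃o α) (F '' (Icc (-1) n \ {i, j})) := by
    rintro l hl g ⟨hgΓ, hg⟩
    refine ⟨hgΓ, (mem_fixingSubgroup_iff _).2 ?_⟩
    rintro _ ⟨k, ⟨hk, hkij⟩, rfl⟩
    exact hg k hk (ne_of_mem_of_not_mem hl hkij).symm
  refine subset_antisymm (fun φ hφ => hK.mem_Rset_mul_Rset hΓ hFflag hFrk hi hij hji ?_) ?_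
  · refine (Subgroup.closure_le _).2 (union_subset ?_ ?_) hφ
    · exact hRset_le i (mem_insert i {j})
    · exact hRset_le j (mem_insert_of_mem i rfl)
  · exact Subgroup.mul_subset (subset_union_left.trans Subgroup.subset_closure)
      (subset_union_right.trans Subgroup.subset_closure)

end IncComplex

theorem distinguished_subgroups_commute_general
    {α : Type*} [PartialOrder α] [BoundedOrder α] (n : ℤ) (rk : α → ℤ)
    (hK : IncComplex α n rk)
    (Γ : Subgroup (α ≃o α)) (hΓ : FlagTrans Γ)
    (F : ℤ → α) (hFflag : IsFlagOf Set.univ (F '' Set.Icc (-1 : ℤ) n))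
    (hFrk : ∀ i ∈ Set.Icc (-1 : ℤ) n, rk (F i) = i)
    (i j : ℤ) (hi : -1 ≤ i) (hij : i < j - 1) (hj : j ≤ n) :
    Rset Γ F n i * Rset Γ F n j =
        ↑(Subgroup.closure (Rset Γ F n i ∪ Rset Γ F n j)) ∧
      (↑(Subgroup.closure (Rset Γ F n i ∪ Rset Γ F n j)) : Set (α ≃o α)) =
        Rset Γ F n j * Rset Γ F n i := by
  have hij' := hK.coe_closure_Rset_union_eq_mul hΓ hFflag hFrk ⟨hi, by omega⟩
    (by omega) (by omega) (j := j)
  have hji' := hK.coe_closure_Rset_union_eq_mul hΓ hFflag hFrk ⟨by omega, hj⟩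
    (by omega) (by omega) (j := i)
  rw [union_comm] at hji'
  exact ⟨hij'.symm, hji'⟩

/-- for non-adjacent indices `i < j-1`, the product sets satisfy
`R_i R_j = ⟨R_i, R_j⟩ = R_j R_i`. -/
theorem distinguished_subgroups_commute
    {α : Type*} [PartialOrder α] [BoundedOrder α] (n : ℤ) (rk : α → ℤ)
    (hn : 1 ≤ n) (hK : IncComplex α n rk)
    (Γ : Subgroup (α ≃o α)) (hΓ : FlagTrans Γ)
    (F : ℤ → α) (hFflag : IsFlagOf Set.univ (F '' Set.Icc (-1 : ℤ) n))
    (hFrk : ∀ i ∈ Set.Icc (-1 : ℤ) n, rk (F i) = i)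
    (i j : ℤ) (hi : -1 ≤ i) (hij : i < j - 1) (hj : j ≤ n) :
    Rset Γ F n i * Rset Γ F n j =
        ↑(Subgroup.closure (Rset Γ F n i ∪ Rset Γ F n j)) ∧
      (↑(Subgroup.closure (Rset Γ F n i ∪ Rset Γ F n j)) : Set (α ≃o α)) =
        Rset Γ F n j * Rset Γ F n i :=
  distinguished_subgroups_commute_general n rk hK Γ hΓ F hFflag hFrk i j hi hij hj
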